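/- Let V_X := (1/√2)(I_X⊗⟨0| + i·I_X⊗⟨1|) be the coisometry from H_X⊗ℝ² onto H_X, and for a real Kraus operator K : X_i⊗ℝ² → X_o⊗ℝ² define L_0 := V_{X_o} K V_{X_i}† and L_1 := conj(V_{X_o}) K V_{X_i}†. Then for any family of real matrices K_1,…,K_m: Σ_r (L_{r,0}† L_{r,0} + L_{r,1}† L_{r,1}) = V_{X_i} (Σ_r K_rᵀ K_r) V_{X_i}†. In particular, if Σ_r K_rᵀ K_r ≤ I then Σ_r (L_{r,0}† L_{r,0} + L_{r,1}† L_{r,1}) ≤ I, and if Σ_r K_rᵀ K_r = I then Σ_r (L_{r,0}† L_{r,0} + L_{r,1}† L_{r,1}) = I; moreover, if K = r(K̃) is the realification of a complex matrix K̃ (with r(M) := Re(M)⊗I₂ + Im(M)⊗J, J = [[0,-1],[1,0]]), then V_{X_o} K V_{X_i}† = K̃ and conj(V_{X_o}) K V_{X_i}† = 0. -/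
import Mathlib


open Matrix BigOperators
open scoped Kronecker ComplexOrder

noncomputable section

/-- Entrywise complex conjugation of a matrix (in the fixed bases). -/
def conjM {m n : Type*} (M : Matrix m n ℂ) : Matrix m n ℂ := M.map (starRingEnd ℂ)

/-- The complex matrix `J = [[0,-1],[1,0]]` representing the imaginary unit. -/
def JmatC : Matrix (Fin 2) (Fin 2) ℂ := !![0, -1; 1, 0]

/-- The realification map `r(M) = Re(M) ⊗ I₂ + Im(M) ⊗ J` (with values regarded as
complex matrices with real entries). -/
def realifyC {m n : Type*} (M : Matrix m n ℂ) :
    Matrix (m × Fin 2) (n × Fin 2) ℂ :=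
  (M.map fun z => (z.re : ℂ)) ⊗ₖ (1 : Matrix (Fin 2) (Fin 2) ℂ) +
    (M.map fun z => (z.im : ℂ)) ⊗ₖ JmatC

/-- The coisometry `V_X = (1/√2)(I_X ⊗ ⟨0| + i · I_X ⊗ ⟨1|)` from `H_X ⊗ ℝ²` onto
`H_X`. -/
def Vco (X : Type) [DecidableEq X] : Matrix X (X × Fin 2) ℂ :=
  fun x p =>
    if x = p.1 then
      (if p.2 = 0 then ((Real.sqrt 2 : ℂ))⁻¹ else Complex.I * ((Real.sqrt 2 : ℂ))⁻¹)
    else 0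

lemma inv_sqrt_two_sq : ((Real.sqrt 2 : ℂ))⁻¹ * ((Real.sqrt 2 : ℂ))⁻¹ = 2⁻¹ := by
  rw [← mul_inv]
  norm_num [← Complex.ofReal_mul, Real.mul_self_sqrt]

lemma Vco_coiso (X : Type) [Fintype X] [DecidableEq X] :
    Vco X * (Vco X)ᴴ = 1 := by
  ext x y
  simp [Matrix.mul_apply, Vco, Fintype.sum_prod_type, Fin.sum_univ_two,
    Matrix.one_apply, conjTranspose_apply, apply_ite (starRingEnd ℂ)]
  by_cases h : x = y
  · simp [h, inv_sqrt_two_sq, Complex.mul_conj]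
    ring_nf
    simp [sq, inv_sqrt_two_sq, Complex.I_sq]
    ring_nf
  · simp [h]

lemma Vco_middle (X : Type) [Fintype X] [DecidableEq X] :
    (Vco X)ᴴ * Vco X + (Vco X)ᵀ * conjM (Vco X) = 1 := by
  ext p q
  simp only [Matrix.add_apply, Matrix.mul_apply, Vco, conjM, Matrix.map_apply,
    conjTranspose_apply, transpose_apply, Matrix.one_apply,
    apply_ite (starRingEnd ℂ)]
  rcases p with ⟨px, pa⟩; rcases q with ⟨qx, qa⟩
  by_cases h1 : px = qx
  · subst h1
    simp_all
    fin_cases pa <;> fin_cases qa <;>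
      simp_all [inv_sqrt_two_sq, Complex.I_sq] <;> ring_nf <;>
      simp [sq, inv_sqrt_two_sq, Complex.I_sq]
  · simp_all [Prod.ext_iff]
    simp [show ¬ qx = px from fun h => h1 h.symm]

lemma realify_recomplex {Xi Xo : Type} [Fintype Xi] [DecidableEq Xi]
    [Fintype Xo] [DecidableEq Xo] (Kt : Matrix Xo Xi ℂ) :
    Vco Xo * realifyC Kt * (Vco Xi)ᴴ = Kt := by
  ext x y
  simp only [Matrix.mul_apply, Vco, realifyC, JmatC, Matrix.add_apply,
    Matrix.kroneckerMap_apply, Matrix.map_apply, conjTranspose_apply,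
    Fintype.sum_prod_type, Fin.sum_univ_two, Matrix.one_apply,
    apply_ite (starRingEnd ℂ), ite_mul, zero_mul, mul_ite, mul_zero,
    Finset.sum_ite_eq, Finset.sum_ite_eq', Finset.mem_univ, if_true]
  simp [Matrix.of_apply, Fin.isValue, _root_.map_mul, Complex.conj_I]
  simp [Finset.sum_add_distrib, Finset.sum_ite_eq, Finset.sum_ite_eq',
    apply_ite (starRingEnd ℂ), Complex.conj_I, mul_ite, ite_mul, mul_zero, zero_mul,
    _root_.map_mul]
  ring_nf
  simp [sq, inv_sqrt_two_sq, Complex.I_sq]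
  ring_nf
  conv_rhs => rw [← Complex.re_add_im (Kt x y)]
  ring

lemma realify_recomplex_conj {Xi Xo : Type} [Fintype Xi] [DecidableEq Xi]
    [Fintype Xo] [DecidableEq Xo] (Kt : Matrix Xo Xi ℂ) :
    conjM (Vco Xo) * realifyC Kt * (Vco Xi)ᴴ = 0 := by
  ext x y
  simp only [Matrix.mul_apply, Vco, conjM, realifyC, JmatC, Matrix.add_apply,
    Matrix.kroneckerMap_apply, Matrix.map_apply, conjTranspose_apply,
    Fintype.sum_prod_type, Fin.sum_univ_two, Matrix.one_apply,
    apply_ite (starRingEnd ℂ), ite_mul, zero_mul, mul_ite, mul_zero,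
    Finset.sum_ite_eq, Finset.sum_ite_eq', Finset.mem_univ, if_true]
  simp [Matrix.of_apply, Fin.isValue, _root_.map_mul, Complex.conj_I]
  simp [Finset.sum_add_distrib, Finset.sum_ite_eq, Finset.sum_ite_eq',
    apply_ite (starRingEnd ℂ), Complex.conj_I, mul_ite, ite_mul, mul_zero, zero_mul,
    _root_.map_mul]
  ring_nf
  simp [sq, inv_sqrt_two_sq, Complex.I_sq]

lemma key_identity {Xi Xo : Type} [Fintype Xi] [DecidableEq Xi]
    [Fintype Xo] [DecidableEq Xo] (K : Matrix (Xo × Fin 2) (Xi × Fin 2) ℂ)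
    (hK : conjM K = K) :
    (Vco Xo * K * (Vco Xi)ᴴ)ᴴ * (Vco Xo * K * (Vco Xi)ᴴ) +
      (conjM (Vco Xo) * K * (Vco Xi)ᴴ)ᴴ * (conjM (Vco Xo) * K * (Vco Xi)ᴴ)
      = Vco Xi * (Kᵀ * K) * (Vco Xi)ᴴ := by
  have hKH : Kᴴ = Kᵀ := by
    conv_lhs => rw [← hK]
    ext i j
    simp [conjM, conjTranspose_apply, transpose_apply]
  have hcH : (conjM (Vco Xo))ᴴ = (Vco Xo)ᵀ := by
    ext i j
    simp [conjM, conjTranspose_apply, transpose_apply]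
  have expand :
      (Vco Xo * K * (Vco Xi)ᴴ)ᴴ * (Vco Xo * K * (Vco Xi)ᴴ) +
        (conjM (Vco Xo) * K * (Vco Xi)ᴴ)ᴴ * (conjM (Vco Xo) * K * (Vco Xi)ᴴ)
      = Vco Xi * Kᵀ *
          (((Vco Xo)ᴴ * Vco Xo + (Vco Xo)ᵀ * conjM (Vco Xo)) * (K * (Vco Xi)ᴴ)) := by
    simp only [conjTranspose_mul, conjTranspose_conjTranspose, hKH, hcH]
    simp only [Matrix.add_mul, Matrix.mul_add, Matrix.mul_assoc]
  rw [expand, Vco_middle, Matrix.one_mul]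
  simp only [Matrix.mul_assoc]

/-- Recomplexification at the level of Kraus operators: for real
Kraus operators `K_r` the recomplexified pairs `L_{r,0} = V_{X_o} K_r V_{X_i}†`,
`L_{r,1} = conj(V_{X_o}) K_r V_{X_i}†` satisfy
`Σ_r (L_{r,0}† L_{r,0} + L_{r,1}† L_{r,1}) = V_{X_i} (Σ_r K_rᵀ K_r) V_{X_i}†`, hence
they inherit the trace-nonincreasing / trace-preserving normalization; moreover
recomplexification undoes realification. -/
theorem recomplexification_properties
    {Xi Xo : Type} [Fintype Xi] [DecidableEq Xi] [Fintype Xo] [DecidableEq Xo] :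
    (∀ (m : ℕ) (K : Fin m → Matrix (Xo × Fin 2) (Xi × Fin 2) ℂ),
      (∀ r, conjM (K r) = K r) →
      ((∑ r, ((Vco Xo * K r * (Vco Xi)ᴴ)ᴴ * (Vco Xo * K r * (Vco Xi)ᴴ) +
          (conjM (Vco Xo) * K r * (Vco Xi)ᴴ)ᴴ * (conjM (Vco Xo) * K r * (Vco Xi)ᴴ)))
        = Vco Xi * (∑ r, (K r)ᵀ * K r) * (Vco Xi)ᴴ) ∧
      (((1 : Matrix (Xi × Fin 2) (Xi × Fin 2) ℂ) - ∑ r, (K r)ᵀ * K r).PosSemidef →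
        ((1 : Matrix Xi Xi ℂ) -
          ∑ r, ((Vco Xo * K r * (Vco Xi)ᴴ)ᴴ * (Vco Xo * K r * (Vco Xi)ᴴ) +
            (conjM (Vco Xo) * K r * (Vco Xi)ᴴ)ᴴ *
              (conjM (Vco Xo) * K r * (Vco Xi)ᴴ))).PosSemidef) ∧
      ((∑ r, (K r)ᵀ * K r) = 1 →
        (∑ r, ((Vco Xo * K r * (Vco Xi)ᴴ)ᴴ * (Vco Xo * K r * (Vco Xi)ᴴ) +
          (conjM (Vco Xo) * K r * (Vco Xi)ᴴ)ᴴ * (conjM (Vco Xo) * K r * (Vco Xi)ᴴ)))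
          = 1)) ∧
    (∀ Kt : Matrix Xo Xi ℂ,
      Vco Xo * realifyC Kt * (Vco Xi)ᴴ = Kt ∧
      conjM (Vco Xo) * realifyC Kt * (Vco Xi)ᴴ = 0) := by
  constructor
  · intro m K hK
    have eq1 : (∑ r, ((Vco Xo * K r * (Vco Xi)ᴴ)ᴴ * (Vco Xo * K r * (Vco Xi)ᴴ) +
          (conjM (Vco Xo) * K r * (Vco Xi)ᴴ)ᴴ * (conjM (Vco Xo) * K r * (Vco Xi)ᴴ)))
        = Vco Xi * (∑ r, (K r)ᵀ * K r) * (Vco Xi)ᴴ := by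
      rw [Matrix.mul_sum, Matrix.sum_mul]
      exact Finset.sum_congr rfl fun r _ => key_identity (K r) (hK r)
    refine ⟨eq1, ?_, ?_⟩
    · intro hPSD
      have eq2 : (1 : Matrix Xi Xi ℂ) -
          (∑ r, ((Vco Xo * K r * (Vco Xi)ᴴ)ᴴ * (Vco Xo * K r * (Vco Xi)ᴴ) +
            (conjM (Vco Xo) * K r * (Vco Xi)ᴴ)ᴴ * (conjM (Vco Xo) * K r * (Vco Xi)ᴴ)))
          = Vco Xi * ((1 : Matrix (Xi × Fin 2) (Xi × Fin 2) ℂ) - ∑ r, (K r)ᵀ * K r) *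
              (Vco Xi)ᴴ := by
        rw [eq1, Matrix.mul_sub, Matrix.mul_one, Matrix.sub_mul, Vco_coiso]
      rw [eq2]
      exact hPSD.mul_mul_conjTranspose_same (Vco Xi)
    · intro hS
      rw [eq1, hS, Matrix.mul_one, Vco_coiso]
  · intro Kt
    exact ⟨realify_recomplex Kt, realify_recomplex_conj Kt⟩
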